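/- (Axer's theorem) Let f, g : ℕ → ℂ be arithmetic functions with f(n) = ∑_{d | n} g(d) for every n ≥ 1. If the series ∑_{n ≥ 1} g(n)/n converges with sum c and ∑_{n ≤ x} |g(n)| = O(x) as x → ∞, then ∑_{n ≤ x} f(n) = c·x + o(x) as x → ∞; in particular M(f) = ∑_{n ≥ 1} g(n)/n. -/

import Mathlib

/-!
Interchanging summations, `∑_{n ≤ N} f(n) = ∑_{d ≤ N} ⌊N/d⌋ g(d)`. Fix `K`. For `d ≤ N/(K+1)` replacing
`⌊N/d⌋` by `N/d` costs at most `∑_{d ≤ N/(K+1)} |g(d)| = O(N/(K+1))` and leaves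
`N ∑_{d ≤ N/(K+1)} g(d)/d ∼ cN`. On each block `N/(k+1) < d ≤ N/k` with `k ≤ K` we have `⌊N/d⌋ = k`,
so the remaining terms are a fixed combination of partial sums `∑_{n ≤ N/k} g(n)`, each `o(N)` by
Kronecker's lemma. Hence `|∑_{n ≤ N} f(n) / N - c| ≲ C/(K+1)` for large `N`, for every `K`.
-/

open Filter Finset Asymptotics Topology

lemma Nat.Icc_one_eq_Ioc_zero (N : ℕ) : Icc 1 N = Ioc 0 N := rfl

lemma sum_Icc_one_add_sum_Ioc {M : Type*} [AddCommMonoid M] (g : ℕ → M) {a b : ℕ} (hab : a ≤ b) :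
    ∑ n ∈ Icc 1 a, g n + ∑ n ∈ Ioc a b, g n = ∑ n ∈ Icc 1 b, g n := by
  simpa only [Nat.Icc_one_eq_Ioc_zero] using sum_Ioc_consecutive g (Nat.zero_le a) hab

lemma sum_Icc_nsmul_by_parts {M : Type*} [AddCommGroup M] (b : ℕ → M) (N : ℕ) :
    ∑ n ∈ Icc 1 N, n • b n = N • ∑ n ∈ Icc 1 N, b n - ∑ k ∈ range N, ∑ n ∈ Icc 1 k, b n := by
  induction N with
  | zero => simp
  | succ N ih =>
    rw [sum_Icc_succ_top (by omega), ih, sum_Icc_succ_top (by omega), sum_range_succ]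
    simp only [succ_nsmul, nsmul_add]
    abel

/-- **Kronecker's lemma**. -/
theorem isLittleO_sum_Icc_mul_of_tendsto {𝕜 : Type*} [RCLike 𝕜] {b : ℕ → 𝕜} {c : 𝕜}
    (hb : Tendsto (fun N => ∑ n ∈ Icc 1 N, b n) atTop (𝓝 c)) :
    (fun N : ℕ => ∑ n ∈ Icc 1 N, (n : 𝕜) * b n) =o[atTop] (fun N : ℕ => (N : 𝕜)) := by
  rw [isLittleO_iff_tendsto fun N hN => by simp [Nat.cast_eq_zero.1 hN]]
  have h := hb.sub hb.cesaro_smul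
  rw [sub_self] at h
  refine h.congr' ?_
  filter_upwards [eventually_ne_atTop 0] with N hN
  have hN' : (N : 𝕜) ≠ 0 := Nat.cast_ne_zero.2 hN
  simp_rw [← nsmul_eq_mul]
  rw [sum_Icc_nsmul_by_parts, nsmul_eq_mul, RCLike.real_smul_eq_coe_mul]
  push_cast
  field_simp

lemma Asymptotics.IsLittleO.comp_div_const {𝕜 : Type*} [RCLike 𝕜] {s : ℕ → 𝕜}
    (hs : s =o[atTop] (fun N : ℕ => (N : 𝕜))) {k : ℕ} (hk : k ≠ 0) :
    (fun N => s (N / k)) =o[atTop] (fun N : ℕ => (N : 𝕜)) := by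
  refine (hs.comp_tendsto (Nat.tendsto_div_const_atTop hk)).trans_isBigO <|
    IsBigO.of_bound 1 (Eventually.of_forall fun N => ?_)
  simp only [Function.comp_apply, RCLike.norm_natCast, one_mul, Nat.cast_le]
  exact Nat.div_le_self N k

lemma sum_Icc_sum_divisors {M : Type*} [AddCommMonoid M] (g : ℕ → M) (N : ℕ) :
    ∑ n ∈ Icc 1 N, ∑ d ∈ n.divisors, g d = ∑ d ∈ Icc 1 N, (N / d) • g d := by
  rw [sum_comm' (t' := Icc 1 N) (s' := fun d => {n ∈ Icc 1 N | d ∣ n})]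
  · simp only [sum_const, Nat.Icc_one_eq_Ioc_zero, Nat.Ioc_filter_dvd_card_eq_div]
  · intro n d
    simp only [mem_Icc, mem_filter, Nat.mem_divisors]
    constructor
    · rintro ⟨⟨hn, hnN⟩, hdn, -⟩
      exact ⟨⟨⟨hn, hnN⟩, hdn⟩, Nat.pos_of_dvd_of_pos hdn hn, (Nat.le_of_dvd hn hdn).trans hnN⟩
    · rintro ⟨⟨⟨hn, hnN⟩, hdn⟩, -⟩
      exact ⟨⟨hn, hnN⟩, hdn, by omega⟩

lemma Nat.div_eq_of_mem_Ioc {N k d : ℕ} (hk : 0 < k) (hd : d ∈ Ioc (N / (k + 1)) (N / k)) :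
    N / d = k := by
  obtain ⟨hlo, hhi⟩ := mem_Ioc.1 hd
  have hd0 : 0 < d := (Nat.zero_le _).trans_lt hlo
  refine le_antisymm ?_ ?_
  · rw [Nat.div_lt_iff_lt_mul (by omega)] at hlo
    exact Nat.lt_succ_iff.1 ((Nat.div_lt_iff_lt_mul hd0).2 (by rw [mul_comm]; exact hlo))
  · rw [Nat.le_div_iff_mul_le hk] at hhi
    exact (Nat.le_div_iff_mul_le hd0).2 (by rw [mul_comm]; exact hhi)

/-- On the block `N/(k+1) < d ≤ N/k` the weight `N / d` is constantly `k`. -/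
lemma sum_Icc_div_nsmul_eq {M : Type*} [AddCommMonoid M] (g : ℕ → M) (N K : ℕ) :
    ∑ d ∈ Icc 1 N, (N / d) • g d = ∑ d ∈ Icc 1 (N / (K + 1)), (N / d) • g d +
      ∑ k ∈ Icc 1 K, k • ∑ d ∈ Ioc (N / (k + 1)) (N / k), g d := by
  induction K with
  | zero => simp
  | succ K ih =>
    have hblock : ∑ d ∈ Ioc (N / (K + 1 + 1)) (N / (K + 1)), (N / d) • g d =
        (K + 1) • ∑ d ∈ Ioc (N / (K + 1 + 1)) (N / (K + 1)), g d := by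
      rw [smul_sum]
      exact sum_congr rfl fun d hd => by rw [Nat.div_eq_of_mem_Ioc K.succ_pos hd]
    rw [ih, ← sum_Icc_one_add_sum_Ioc _ (Nat.div_le_div_left (K + 1).le_succ K.succ_pos), hblock,
      sum_Icc_succ_top (by omega)]
    abel

lemma sum_Icc_eq_of_eq_sum_divisors {R : Type*} [Semiring R] {f g : ℕ → R}
    (hf : ∀ n : ℕ, 1 ≤ n → f n = ∑ d ∈ n.divisors, g d) (N K : ℕ) :
    ∑ n ∈ Icc 1 N, f n = ∑ d ∈ Icc 1 (N / (K + 1)), ((N / d : ℕ) : R) * g d +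
      ∑ k ∈ Icc 1 K, (k : R) * ∑ d ∈ Ioc (N / (k + 1)) (N / k), g d := by
  rw [sum_congr rfl fun n hn => hf n (mem_Icc.1 hn).1, sum_Icc_sum_divisors,
    sum_Icc_div_nsmul_eq g N K]
  simp only [nsmul_eq_mul]

lemma isLittleO_sum_Icc_mul_sum_Ioc {𝕜 : Type*} [RCLike 𝕜] {g : ℕ → 𝕜}
    (hS : (fun N => ∑ n ∈ Icc 1 N, g n) =o[atTop] (fun N : ℕ => (N : 𝕜))) (K : ℕ) :
    (fun N => ∑ k ∈ Icc 1 K, (k : 𝕜) * ∑ d ∈ Ioc (N / (k + 1)) (N / k), g d)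
      =o[atTop] (fun N : ℕ => (N : 𝕜)) := by
  refine (IsLittleO.sum (s := Icc 1 K)
    (A := fun (k N : ℕ) => (k : 𝕜) * ∑ d ∈ Ioc (N / (k + 1)) (N / k), g d)
    fun k hk => IsLittleO.const_mul_left ?_ _).congr_left fun N => by simp
  have hk : k ≠ 0 := by have := (mem_Icc.1 hk).1; omega
  refine ((hS.comp_div_const hk).sub (hS.comp_div_const k.succ_ne_zero)).congr_left fun N => ?_
  rw [sub_eq_iff_eq_add', sum_Icc_one_add_sum_Ioc _ (Nat.div_le_div_left k.le_succ (by omega))]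

lemma norm_natCast_div_sub_div_le_one {𝕜 : Type*} [RCLike 𝕜] (N d : ℕ) :
    ‖((N / d : ℕ) : 𝕜) - (N : 𝕜) / d‖ ≤ 1 := by
  have hcast : ((N / d : ℕ) : 𝕜) - (N : 𝕜) / d = (((⌊(N : ℝ) / d⌋₊ : ℕ) : ℝ) - (N : ℝ) / d : ℝ) := by
    rw [Nat.floor_div_eq_div]
    push_cast
    rfl
  have hlo := Nat.floor_le (div_nonneg (Nat.cast_nonneg N) (Nat.cast_nonneg d) : (0 : ℝ) ≤ N / d)
  have hhi := Nat.lt_floor_add_one ((N : ℝ) / d)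
  rw [hcast, RCLike.norm_ofReal, abs_le]
  constructor <;> linarith

lemma norm_sum_natCast_div_mul_sub_le {𝕜 : Type*} [RCLike 𝕜] (g : ℕ → 𝕜) (N : ℕ) (s : Finset ℕ) :
    ‖∑ d ∈ s, ((N / d : ℕ) : 𝕜) * g d - N * ∑ d ∈ s, g d / d‖ ≤ ∑ d ∈ s, ‖g d‖ := by
  rw [mul_sum, ← sum_sub_distrib]
  refine (norm_sum_le _ _).trans (sum_le_sum fun d _ => ?_)
  calc ‖((N / d : ℕ) : 𝕜) * g d - N * (g d / d)‖ = ‖((N / d : ℕ) : 𝕜) - (N : 𝕜) / d‖ * ‖g d‖ := by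
        rw [← norm_mul]; ring_nf
    _ ≤ ‖g d‖ := mul_le_of_le_one_left (norm_nonneg _) (norm_natCast_div_sub_div_le_one N d)

lemma tendsto_of_forall_exists_tendsto_dist_le {α E : Type*} [PseudoMetricSpace E] {l : Filter α}
    {a : α → E} {c : E}
    (h : ∀ ε > 0, ∃ u : α → E, Tendsto u l (𝓝 c) ∧ ∀ᶠ x in l, dist (a x) (u x) ≤ ε) :
    Tendsto a l (𝓝 c) := by
  refine Metric.tendsto_nhds.2 fun ε hε => ?_
  obtain ⟨u, hu, hau⟩ := h (ε / 2) (half_pos hε)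
  filter_upwards [Metric.tendsto_nhds.1 hu (ε / 2) (half_pos hε), hau] with x hux hax
  linarith [dist_triangle (a x) (u x) c]

lemma tendsto_div_natFloor_of_tendsto {s : ℕ → ℂ} {c : ℂ}
    (hs : Tendsto (fun N : ℕ => s N / N) atTop (𝓝 c)) :
    Tendsto (fun x : ℝ => s ⌊x⌋₊ / x) atTop (𝓝 c) := by
  have hfloor : Tendsto (fun x : ℝ => ((⌊x⌋₊ : ℝ) / x : ℝ)) atTop (𝓝 1) :=
    tendsto_nat_floor_div_atTop
  have h := (hs.comp tendsto_nat_floor_atTop).mul (Complex.continuous_ofReal.tendsto 1 |>.comp hfloor)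
  rw [Complex.ofReal_one, mul_one] at h
  refine h.congr' ?_
  filter_upwards [eventually_ge_atTop (1 : ℝ)] with x hx
  have hN : (⌊x⌋₊ : ℂ) ≠ 0 := Nat.cast_ne_zero.2 (Nat.floor_pos.2 hx).ne'
  have hx : (x : ℂ) ≠ 0 := Complex.ofReal_ne_zero.2 (by linarith)
  simp only [Function.comp_apply, Complex.ofReal_div, Complex.ofReal_natCast]
  field_simp

theorem tendsto_sum_Icc_div_of_eq_sum_divisors (f g : ℕ → ℂ) (c : ℂ)
    (hf : ∀ n : ℕ, 1 ≤ n → f n = ∑ d ∈ n.divisors, g d)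
    (hc : Tendsto (fun N : ℕ => ∑ n ∈ Icc 1 N, g n / n) atTop (𝓝 c))
    (hg : (fun N : ℕ => ∑ n ∈ Icc 1 N, ‖g n‖) =O[atTop] (fun N : ℕ => (N : ℝ))) :
    Tendsto (fun N : ℕ => (∑ n ∈ Icc 1 N, f n) / N) atTop (𝓝 c) := by
  obtain ⟨C, hC0, hC⟩ := hg.exists_pos
  have hS : (fun N => ∑ n ∈ Icc 1 N, g n) =o[atTop] (fun N : ℕ => (N : ℂ)) := by
    refine (isLittleO_sum_Icc_mul_of_tendsto hc).congr_left fun N => sum_congr rfl fun n hn => ?_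
    have : (n : ℂ) ≠ 0 := Nat.cast_ne_zero.2 (by have := (mem_Icc.1 hn).1; omega)
    field_simp
  refine tendsto_of_forall_exists_tendsto_dist_le fun ε hε => ?_
  obtain ⟨K, hK⟩ := exists_nat_gt (C / ε)
  set T : ℕ → ℂ := fun N => ∑ k ∈ Icc 1 K, (k : ℂ) * ∑ d ∈ Ioc (N / (k + 1)) (N / k), g d
  have hdiv := Nat.tendsto_div_const_atTop K.succ_ne_zero
  refine ⟨fun N => ∑ n ∈ Icc 1 (N / (K + 1)), g n / n + T N / N, ?_, ?_⟩
  · simpa using (hc.comp hdiv).add (isLittleO_sum_Icc_mul_sum_Ioc hS K).tendsto_div_nhds_zero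
  filter_upwards [hdiv.eventually hC.bound, eventually_gt_atTop 0] with N hCN hN
  set M := N / (K + 1)
  have hN' : (N : ℂ) ≠ 0 := Nat.cast_ne_zero.2 hN.ne'
  have hCN' : ∑ n ∈ Icc 1 M, ‖g n‖ ≤ C * M := by
    simpa [Real.norm_of_nonneg (sum_nonneg fun n _ => norm_nonneg (g n))] using hCN
  calc dist ((∑ n ∈ Icc 1 N, f n) / N) (∑ n ∈ Icc 1 M, g n / n + T N / N)
      = ‖∑ d ∈ Icc 1 M, ((N / d : ℕ) : ℂ) * g d - N * ∑ n ∈ Icc 1 M, g n / n‖ / N := by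
        rw [dist_eq_norm, sum_Icc_eq_of_eq_sum_divisors hf N K, ← Complex.norm_natCast, ← norm_div]
        congr 1
        field_simp
        ring
    _ ≤ (∑ n ∈ Icc 1 M, ‖g n‖) / N := by gcongr; exact norm_sum_natCast_div_mul_sub_le g N _
    _ ≤ C * (N / (K + 1)) / N := by
        gcongr
        refine hCN'.trans (mul_le_mul_of_nonneg_left ?_ hC0.le)
        exact_mod_cast (Nat.cast_div_le : (M : ℝ) ≤ N / ((K + 1 : ℕ) : ℝ))
    _ = C / (K + 1) := by field_simp
    _ ≤ ε := by
        rw [div_le_iff₀ (by positivity)]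
        rw [div_lt_iff₀ hε] at hK
        nlinarith

/-- **Axer's theorem** (Theorem 8): if f(n) = ∑_{d ∣ n} g(d), the series
∑_{n ≥ 1} g(n)/n converges with sum c, and ∑_{n ≤ x} |g(n)| = O(x), then
∑_{n ≤ x} f(n) = c·x + o(x); in particular M(f) = c. -/
theorem axer (f g : ℕ → ℂ) (c : ℂ)
    (hf : ∀ n : ℕ, 1 ≤ n → f n = ∑ d ∈ n.divisors, g d)
    (hc : Tendsto (fun N : ℕ => ∑ n ∈ Finset.Icc 1 N, g n / n) atTop (nhds c))
    (hg : (fun x : ℝ => ∑ n ∈ Finset.Icc 1 ⌊x⌋₊, ‖g n‖) =O[atTop] (fun x : ℝ => x)) :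
    Tendsto (fun x : ℝ => (∑ n ∈ Finset.Icc 1 ⌊x⌋₊, f n) / x) atTop (nhds c) := by
  refine tendsto_div_natFloor_of_tendsto (s := fun N => ∑ n ∈ Icc 1 N, f n)
    (tendsto_sum_Icc_div_of_eq_sum_divisors f g c hf hc ?_)
  have h := hg.comp_tendsto tendsto_natCast_atTop_atTop
  simp only [Function.comp_def, Nat.floor_natCast] at h
  exact h
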